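/- arXiv:1908.07955 — 2 statements merged into one kernel-verified Lean document; each statement's English description precedes it below -/
import Mathlib

section
/- For every integer n ≥ 3, Σ_{π ∈ Sym(n+1)} (des(π) − n/2)⁴ = (n+1)! · (n+2)(5n+8)/240. Equivalently, for the descent random variable D on the Coxeter group of type Aₙ (with E(D) = n/2), the fourth centred moment is E((D − E(D))⁴) = (n+2)(5n+8)/240. -/
open Finset Filter MeasureTheory ProbabilityTheory Topology

noncomputable section

/-- The descent number of a permutation of `{0, 1, …, n}`:
`des(π) = #{0 ≤ i < n : π(i) > π(i+1)}`. -/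
def permDes {n : ℕ} (π : Equiv.Perm (Fin (n + 1))) : ℕ :=
  (Finset.univ.filter fun i : Fin n => π i.succ < π i.castSucc).card

/-- Expected value of `f` under the uniform distribution on the finite type `Ω`. -/
def finExp {Ω : Type*} [Fintype Ω] (f : Ω → ℝ) : ℝ :=
  (∑ ω, f ω) / (Fintype.card Ω)

namespace DesAux
open Equiv


variable {n : ℕ}

def ins (π : Equiv.Perm (Fin (n + 1))) (p : Fin (n + 2)) : Equiv.Perm (Fin (n + 2)) :=
  (finSuccEquiv' p).trans ((Equiv.optionCongr π).trans (finSuccEquiv' (Fin.last (n + 1))).symm)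

lemma ins_self (π : Equiv.Perm (Fin (n + 1))) (p : Fin (n + 2)) :
    ins π p p = Fin.last (n + 1) := by
  simp [ins, finSuccEquiv'_at, finSuccEquiv'_symm_none]

lemma ins_succAbove (π : Equiv.Perm (Fin (n + 1))) (p : Fin (n + 2)) (j : Fin (n + 1)) :
    ins π p (p.succAbove j) = (π j).castSucc := by
  simp [ins, finSuccEquiv'_succAbove, finSuccEquiv'_symm_some, Fin.succAbove_last]

lemma ins_lt (π : Equiv.Perm (Fin (n + 1))) (p : Fin (n + 2)) (x : Fin (n + 1))
    (h : x.castSucc < p) : ins π p x.castSucc = (π x).castSucc := by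
  rw [← Fin.succAbove_of_castSucc_lt p x h, ins_succAbove]

lemma ins_ge (π : Equiv.Perm (Fin (n + 1))) (p : Fin (n + 2)) (x : Fin (n + 1))
    (h : p ≤ x.castSucc) : ins π p x.succ = (π x).castSucc := by
  rw [← Fin.succAbove_of_le_castSucc p x h, ins_succAbove]

lemma permDes_ins_last (π : Equiv.Perm (Fin (n + 1))) :
    permDes (ins π (Fin.last (n + 1))) = permDes π := by
  unfold permDes
  rw [Finset.card_filter, Finset.card_filter, Fin.sum_univ_castSucc]
  have h1 : ∀ x : Fin (n + 1), ins π (Fin.last (n + 1)) x.castSucc = (π x).castSucc :=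
    fun x => ins_lt π _ x (Fin.castSucc_lt_last x)
  have e0 : (if (ins π (Fin.last (n+1))) (Fin.last n).succ <
      (ins π (Fin.last (n+1))) (Fin.last n).castSucc then (1:ℕ) else 0) = 0 := by
    rw [Fin.succ_last, ins_self]
    exact if_neg (Fin.not_lt.2 (Fin.le_last _))
  rw [e0, add_zero]
  refine Finset.sum_congr rfl fun j _ => ?_
  rw [Fin.succ_castSucc, h1, h1]
  simp [Fin.castSucc_lt_castSucc_iff]

lemma permDes_ins_zero (π : Equiv.Perm (Fin (n + 1))) :
    permDes (ins π 0) = permDes π + 1 := by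
  unfold permDes
  rw [Finset.card_filter, Finset.card_filter, Fin.sum_univ_succ]
  have h1 : ∀ x : Fin (n + 1), ins π 0 x.succ = (π x).castSucc :=
    fun x => ins_ge π 0 x (Fin.zero_le _)
  have e0 : (if (ins π 0) (0 : Fin (n+1)).succ < (ins π 0) (0 : Fin (n+1)).castSucc
      then (1:ℕ) else 0) = 1 := by
    rw [h1, Fin.castSucc_zero, ins_self]
    exact if_pos (Fin.castSucc_lt_last _)
  rw [e0]
  rw [add_comm]
  congr 1
  refine Finset.sum_congr rfl fun j _ => ?_
  rw [show (j.succ : Fin (n+1)).castSucc = (j.castSucc : Fin (n+1)).succ from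
    (Fin.succ_castSucc j).symm, h1, h1]
  simp [Fin.castSucc_lt_castSucc_iff]

lemma permDes_ins_mid (π : Equiv.Perm (Fin (n + 1))) (j : Fin n) :
    permDes (ins π ((j.succ : Fin (n+1)).castSucc)) =
      permDes π + (if π j.succ < π j.castSucc then 0 else 1) := by
  set p : Fin (n + 2) := (j.succ : Fin (n+1)).castSucc with hp
  unfold permDes
  rw [Finset.card_filter, Finset.card_filter, Fin.sum_univ_succAbove _ j.castSucc]
  -- the pivot term vanishes
  have e0 : (if (ins π p) (j.castSucc : Fin (n+1)).succ <
      (ins π p) (j.castSucc : Fin (n+1)).castSucc then (1:ℕ) else 0) = 0 := by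
    rw [Fin.succ_castSucc, ← hp, ins_self]
    exact if_neg (Fin.not_lt.2 (Fin.le_last _))
  rw [e0, zero_add]
  -- split off k = j on both sides
  rw [← Finset.sum_erase_add _ _ (Finset.mem_univ j),
      ← Finset.sum_erase_add _
        (fun k : Fin n => if π k.succ < π k.castSucc then (1:ℕ) else 0)
        (Finset.mem_univ j)]
  have hj : ((j.castSucc : Fin (n+1)).succAbove j) = j.succ :=
    Fin.succAbove_of_le_castSucc _ _ le_rfl
  have ej : (if (ins π p) ((j.castSucc : Fin (n+1)).succAbove j).succ <
      (ins π p) ((j.castSucc : Fin (n+1)).succAbove j).castSucc then (1:ℕ) else 0) = 1 := by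
    rw [hj]
    have h2 : ((j.succ : Fin (n+1))).castSucc = p := rfl
    rw [h2, ins_self, ins_ge π p j.succ (le_of_eq h2.symm)]
    exact if_pos (Fin.castSucc_lt_last _)
  rw [ej]
  have emain : ∀ k ∈ Finset.univ.erase j,
      (if (ins π p) ((j.castSucc : Fin (n+1)).succAbove k).succ <
        (ins π p) ((j.castSucc : Fin (n+1)).succAbove k).castSucc then (1:ℕ) else 0) =
      (if π k.succ < π k.castSucc then (1:ℕ) else 0) := by
    intro k hk
    have hkj : k ≠ j := (Finset.mem_erase.1 hk).1
    rcases lt_or_gt_of_ne hkj with hlt | hgt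
    · -- k < j
      have hv : (k : ℕ) < (j : ℕ) := hlt
      have hsa : (j.castSucc : Fin (n+1)).succAbove k = k.castSucc :=
        Fin.succAbove_of_castSucc_lt _ _
          (by simp only [Fin.lt_def, Fin.coe_castSucc]; omega)
      rw [hsa, Fin.succ_castSucc,
        ins_lt π p k.succ
          (by simp only [hp, Fin.lt_def, Fin.coe_castSucc, Fin.val_succ]; omega),
        ins_lt π p k.castSucc
          (by simp only [hp, Fin.lt_def, Fin.coe_castSucc, Fin.val_succ]; omega)]
      simp [Fin.castSucc_lt_castSucc_iff]
    · -- j < k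
      have hv : (j : ℕ) < (k : ℕ) := hgt
      have hsa : (j.castSucc : Fin (n+1)).succAbove k = k.succ :=
        Fin.succAbove_of_le_castSucc _ _
          (by simp only [Fin.le_def, Fin.coe_castSucc]; omega)
      rw [hsa, show ((k.succ : Fin (n+1))).castSucc = ((k.castSucc : Fin (n+1))).succ from
          (Fin.succ_castSucc k).symm,
        ins_ge π p k.succ
          (by simp only [hp, Fin.le_def, Fin.coe_castSucc, Fin.val_succ]; omega),
        ins_ge π p k.castSucc
          (by simp only [hp, Fin.le_def, Fin.coe_castSucc, Fin.val_succ]; omega)]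
      simp [Fin.castSucc_lt_castSucc_iff]
  rw [Finset.sum_congr rfl emain]
  by_cases hd : π j.succ < π j.castSucc <;> simp [hd]

lemma permDes_le (π : Equiv.Perm (Fin (n + 1))) : permDes π ≤ n := by
  unfold permDes
  exact (Finset.card_filter_le _ _).trans (by simp)

lemma ins_bijective :
    Function.Bijective (fun z : Equiv.Perm (Fin (n + 1)) × Fin (n + 2) => ins z.1 z.2) := by
  rw [Fintype.bijective_iff_injective_and_card]
  constructor
  · rintro ⟨π, p⟩ ⟨π', p'⟩ h
    simp only at h
    have hp : p = p' := by
      have h1 : ins π' p' p = Fin.last (n + 1) := by rw [← h, ins_self]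
      have h2 : ins π' p' p' = Fin.last (n + 1) := ins_self π' p'
      exact (ins π' p').injective (h1.trans h2.symm)
    subst hp
    have hπ : π = π' := by
      ext j
      have := congrArg (fun σ : Equiv.Perm (Fin (n+2)) => σ (p.succAbove j)) h
      simp only [ins_succAbove] at this
      exact congrArg Fin.val (Fin.castSucc_injective _ this)
    rw [hπ]
  · simp [Fintype.card_perm, Nat.factorial_succ]
    ring

lemma key (f : ℕ → ℝ) :
    ∑ σ : Equiv.Perm (Fin (n + 2)), f (permDes σ) =
    ∑ π : Equiv.Perm (Fin (n + 1)),
      (((permDes π : ℝ) + 1) * f (permDes π) +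
        ((n : ℝ) + 1 - (permDes π : ℝ)) * f (permDes π + 1)) := by
  rw [← Function.Bijective.sum_comp ins_bijective (fun σ => f (permDes σ)),
    Fintype.sum_prod_type]
  refine Finset.sum_congr rfl fun π _ => ?_
  rw [Fin.sum_univ_castSucc, Fin.sum_univ_succ, Fin.castSucc_zero,
    permDes_ins_zero, permDes_ins_last]
  have hmid : ∀ j : Fin n, f (permDes (ins π ((j.succ : Fin (n+1)).castSucc))) =
      if π j.succ < π j.castSucc then f (permDes π) else f (permDes π + 1) := by
    intro j
    rw [permDes_ins_mid]
    by_cases hd : π j.succ < π j.castSucc <;> simp [hd]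
  rw [Finset.sum_congr rfl fun j _ => hmid j, Finset.sum_ite, Finset.sum_const,
    Finset.sum_const]
  have hc1 : (Finset.univ.filter fun j : Fin n => π j.succ < π j.castSucc).card
      = permDes π := rfl
  have hc2 : (Finset.univ.filter fun j : Fin n => ¬ π j.succ < π j.castSucc).card
      = n - permDes π := by
    have h := Finset.card_filter_add_card_filter_not
      (s := (Finset.univ : Finset (Fin n))) (p := fun j => π j.succ < π j.castSucc)
    rw [hc1] at h
    simp only [Finset.card_univ, Fintype.card_fin] at h
    omega
  rw [hc1, hc2, nsmul_eq_mul, nsmul_eq_mul, Nat.cast_sub (permDes_le π)]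
  push_cast
  ring

lemma sum_fiber (m : ℕ) (g : ℕ → ℝ) :
    ∑ π : Equiv.Perm (Fin (m + 1)), g (permDes π)
      = ∑ k ∈ Finset.range (m + 1),
          ((Finset.univ.filter fun π : Equiv.Perm (Fin (m + 1)) => permDes π = k).card : ℝ)
            * g k := by
  rw [← Finset.sum_fiberwise_of_maps_to
    (fun π _ => Finset.mem_range.2 (Nat.lt_succ_of_le (permDes_le π)))
    (fun π => g (permDes π))]
  refine Finset.sum_congr rfl fun k _ => ?_
  rw [Finset.sum_congr rfl (fun π hπ => by rw [(Finset.mem_filter.1 hπ).2]),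
    Finset.sum_const, nsmul_eq_mul]

lemma c10 : (Finset.univ.filter fun π : Equiv.Perm (Fin 2) => permDes π = 0).card = 1 := by
  decide
lemma c11 : (Finset.univ.filter fun π : Equiv.Perm (Fin 2) => permDes π = 1).card = 1 := by
  decide
lemma c30 : (Finset.univ.filter fun π : Equiv.Perm (Fin 4) => permDes π = 0).card = 1 := by
  decide
lemma c31 : (Finset.univ.filter fun π : Equiv.Perm (Fin 4) => permDes π = 1).card = 11 := by
  decide
lemma c32 : (Finset.univ.filter fun π : Equiv.Perm (Fin 4) => permDes π = 2).card = 11 := by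
  decide
lemma c33 : (Finset.univ.filter fun π : Equiv.Perm (Fin 4) => permDes π = 3).card = 1 := by
  decide

lemma S2_closed (m : ℕ) (hm : 1 ≤ m) :
    ∑ π : Equiv.Perm (Fin (m + 1)), ((permDes π : ℝ) - m / 2) ^ 2
      = (Nat.factorial (m + 1) : ℝ) * ((m : ℝ) + 2) / 12 := by
  induction m, hm using Nat.le_induction with
  | base =>
    rw [sum_fiber 1 (fun k => ((k : ℝ) - (1 : ℕ) / 2) ^ 2)]
    simp [Finset.sum_range_succ, c10, c11, Nat.factorial]
    norm_num
  | succ m hm ih =>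
    have hk := key (n := m) (fun k => ((k : ℝ) - ((m : ℝ) + 1) / 2) ^ 2)
    have hgoal : ∑ π : Equiv.Perm (Fin (m + 1 + 1)), ((permDes π : ℝ) - (↑(m+1)) / 2) ^ 2
        = ∑ σ : Equiv.Perm (Fin (m + 2)), ((permDes σ : ℝ) - ((m : ℝ) + 1) / 2) ^ 2 := by
      push_cast
      rfl
    rw [hgoal, hk]
    have hpt : ∀ π : Equiv.Perm (Fin (m + 1)),
        (((permDes π : ℝ) + 1) * ((permDes π : ℝ) - ((m : ℝ) + 1) / 2) ^ 2 +
          ((m : ℝ) + 1 - (permDes π : ℝ)) * ((((permDes π : ℕ) + 1 : ℕ) : ℝ) - ((m : ℝ) + 1) / 2) ^ 2)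
        = (m : ℝ) * ((permDes π : ℝ) - m / 2) ^ 2 + ((m : ℝ) + 2) / 4 := by
      intro π
      push_cast
      ring
    rw [Finset.sum_congr rfl fun π _ => hpt π, Finset.sum_add_distrib, ← Finset.mul_sum,
      ih, Finset.sum_const, nsmul_eq_mul]
    simp only [Finset.card_univ, Fintype.card_perm, Fintype.card_fin]
    rw [Nat.factorial_succ (m + 1)]
    push_cast
    ring

lemma S4_closed (m : ℕ) (hm : 3 ≤ m) :
    ∑ π : Equiv.Perm (Fin (m + 1)), ((permDes π : ℝ) - m / 2) ^ 4
      = (Nat.factorial (m + 1) : ℝ) * (((m : ℝ) + 2) * (5 * m + 8) / 240) := by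
  induction m, hm using Nat.le_induction with
  | base =>
    rw [sum_fiber 3 (fun k => ((k : ℝ) - (3 : ℕ) / 2) ^ 4)]
    simp [Finset.sum_range_succ, c30, c31, c32, c33, Nat.factorial]
    norm_num
  | succ m hm ih =>
    have hk := key (n := m) (fun k => ((k : ℝ) - ((m : ℝ) + 1) / 2) ^ 4)
    have hgoal : ∑ π : Equiv.Perm (Fin (m + 1 + 1)), ((permDes π : ℝ) - (↑(m+1)) / 2) ^ 4
        = ∑ σ : Equiv.Perm (Fin (m + 2)), ((permDes σ : ℝ) - ((m : ℝ) + 1) / 2) ^ 4 := by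
      push_cast
      rfl
    rw [hgoal, hk]
    have hpt : ∀ π : Equiv.Perm (Fin (m + 1)),
        (((permDes π : ℝ) + 1) * ((permDes π : ℝ) - ((m : ℝ) + 1) / 2) ^ 4 +
          ((m : ℝ) + 1 - (permDes π : ℝ)) * ((((permDes π : ℕ) + 1 : ℕ) : ℝ) - ((m : ℝ) + 1) / 2) ^ 4)
        = ((m : ℝ) - 2) * ((permDes π : ℝ) - m / 2) ^ 4
            + (3 * (m : ℝ) + 4) / 2 * ((permDes π : ℝ) - m / 2) ^ 2
            + ((m : ℝ) + 2) / 16 := by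
      intro π
      push_cast
      ring
    rw [Finset.sum_congr rfl fun π _ => hpt π, Finset.sum_add_distrib, Finset.sum_add_distrib,
      ← Finset.mul_sum, ← Finset.mul_sum, ih, S2_closed m (by omega), Finset.sum_const,
      nsmul_eq_mul]
    simp only [Finset.card_univ, Fintype.card_perm, Fintype.card_fin]
    rw [Nat.factorial_succ (m + 1)]
    push_cast
    ring

end DesAux

/-- For every `n ≥ 3`, the fourth centred moment of the descent statistic on the symmetric group
`Sym(n+1)` (type `Aₙ`, mean `n/2`) equals `(n+2)(5n+8)/240`. -/
theorem fourth_moment_descent_typeA (n : ℕ) (hn : 3 ≤ n) :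
    (∑ π : Equiv.Perm (Fin (n + 1)), ((permDes π : ℝ) - n / 2) ^ 4) =
      (Nat.factorial (n + 1) : ℝ) * (((n : ℝ) + 2) * (5 * n + 8) / 240) ∧
    finExp (fun π : Equiv.Perm (Fin (n + 1)) => ((permDes π : ℝ) - n / 2) ^ 4) =
      ((n : ℝ) + 2) * (5 * n + 8) / 240 := by
  refine ⟨DesAux.S4_closed n hn, ?_⟩
  have hcard : ((Fintype.card (Equiv.Perm (Fin (n + 1)))) : ℝ)
      = (Nat.factorial (n + 1) : ℝ) := by
    simp [Fintype.card_perm]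
  rw [finExp, DesAux.S4_closed n hn, hcard,
    mul_div_cancel_left₀ _ (Nat.cast_ne_zero.2 (Nat.factorial_ne_zero (n + 1)))]

end
end

section
/- Let (W, {s, s'}) be a Coxeter system of rank 2 with m(s, s') = m, where 2 ≤ m < ∞, so that W is dihedral of order 2m. Then Σ_{w∈W} (t(w) − 2)² = 8; equivalently, the two-sided descent statistic T on W under the uniform distribution has E(T) = 2 and Var(T) = 4/m. (Consequently, by independence of the factors, the variance of the two-sided descent statistic on a product ∏_{i=1}^k I₂(m_i) of dihedral Coxeter groups equals Σ_{i=1}^k 4/m_i.) -/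
open Finset Filter MeasureTheory ProbabilityTheory Topology

noncomputable section

/-- The number of descents of `w` with respect to the Coxeter system `cs`:
`des(w) = #{s ∈ S : ℓ(ws) < ℓ(w)}`. -/
def CoxeterSystem.des {B W : Type*} [Fintype B] [Group W] {M : CoxeterMatrix B}
    (cs : CoxeterSystem M W) (w : W) : ℕ :=
  (Finset.univ.filter fun i : B => cs.length (w * cs.simple i) < cs.length w).card

/-- The two-sided descent statistic `t(w) = des(w) + des(w⁻¹)`. -/
def CoxeterSystem.tStat {B W : Type*} [Fintype B] [Group W] {M : CoxeterMatrix B}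
    (cs : CoxeterSystem M W) (w : W) : ℕ :=
  cs.des w + cs.des w⁻¹

/-- Variance of `f` under the uniform distribution on the finite type `Ω`. -/
def finVar {Ω : Type*} [Fintype Ω] (f : Ω → ℝ) : ℝ :=
  finExp (fun ω => (f ω - finExp f) ^ 2)

namespace TSD

open CoxeterSystem DihedralGroup

variable {W : Type*} [Group W] {m : ℕ} {M : CoxeterMatrix (Fin 2)} (cs : CoxeterSystem M W)

def U (k : ℕ) : W := cs.wordProd (alternatingWord 0 1 k)
def V (k : ℕ) : W := cs.wordProd (alternatingWord 1 0 k)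

lemma U_zero : U cs 0 = 1 := by simp [U, alternatingWord]
lemma V_zero : V cs 0 = 1 := by simp [V, alternatingWord]
lemma U_succ (k : ℕ) : U cs (k+1) = V cs k * cs.simple 1 := by
  rw [U, V, alternatingWord_succ, wordProd_concat]
lemma V_succ (k : ℕ) : V cs (k+1) = U cs k * cs.simple 0 := by
  rw [U, V, alternatingWord_succ, wordProd_concat]

lemma U_one : U cs 1 = cs.simple 1 := by
  have h : U cs (0+1) = cs.simple 1 := by rw [U_succ, V_zero, one_mul]
  exact h
lemma V_one : V cs 1 = cs.simple 0 := by
  have h : V cs (0+1) = cs.simple 0 := by rw [V_succ, U_zero, one_mul]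
  exact h

lemma len_U_le (k : ℕ) : cs.length (U cs k) ≤ k :=
  (cs.length_wordProd_le _).trans_eq (length_alternatingWord 0 1 k)
lemma len_V_le (k : ℕ) : cs.length (V cs k) ≤ k :=
  (cs.length_wordProd_le _).trans_eq (length_alternatingWord 1 0 k)

def dmap (m : ℕ) : Fin 2 → DihedralGroup m := fun i => sr (i.val : ZMod m)

lemma liftable (hM : M 0 1 = m) : M.IsLiftable (dmap m) := by
  have hM' : M 1 0 = m := (M.symmetric 1 0).trans hM
  intro i i'
  fin_cases i <;> fin_cases i' <;>
    simp [dmap, M.diagonal, hM, hM', one_def, -r_zero]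


def phi (cs : CoxeterSystem M W) (hM : M 0 1 = m) : W →* DihedralGroup m :=
  cs.lift ⟨dmap m, liftable hM⟩

lemma phi_simple (hM : M 0 1 = m) (i : Fin 2) : phi cs hM (cs.simple i) = dmap m i :=
  cs.lift_apply_simple (liftable hM) i

lemma r_inv (n : ℕ) (a : ZMod n) : (r a : DihedralGroup n)⁻¹ = r (-a) :=
  inv_eq_of_mul_eq_one_right (by simp [one_def, -r_zero])

lemma phi_U (hM : M 0 1 = m) (k : ℕ) :
    phi cs hM (U cs k) =
      if Even k then r ((k/2 : ℕ) : ZMod m) else sr (1 + ((k/2 : ℕ) : ZMod m)) := by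
  rw [U, cs.prod_alternatingWord_eq_mul_pow]
  have h01 : phi cs hM (cs.simple 0 * cs.simple 1) = r 1 := by
    rw [map_mul, phi_simple, phi_simple]
    simp [dmap]
  by_cases h : Even k
  · simp only [h, if_true, one_mul, map_pow, h01, r_one_pow]
  · simp only [h, if_false, map_mul, map_pow, h01, r_one_pow, phi_simple]
    simp [dmap]

lemma phi_V (hM : M 0 1 = m) (k : ℕ) :
    phi cs hM (V cs k) =
      if Even k then r (-((k/2 : ℕ) : ZMod m)) else sr (-((k/2 : ℕ) : ZMod m)) := by
  rw [V, cs.prod_alternatingWord_eq_mul_pow]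
  have h10 : phi cs hM (cs.simple 1 * cs.simple 0) = r (-1) := by
    rw [map_mul, phi_simple, phi_simple]
    simp [dmap]
  have hpow : ∀ t : ℕ, (r (-1) : DihedralGroup m) ^ t = r (-(t : ZMod m)) := by
    intro t
    rw [show (r (-(1:ZMod m)) : DihedralGroup m) = (r 1)⁻¹ from (r_inv m 1).symm ▸ rfl,
      inv_pow, r_one_pow, r_inv]
  by_cases h : Even k
  · simp only [h, if_true, one_mul, map_pow, h10, hpow]
  · simp only [h, if_false, map_mul, map_pow, h10, hpow, phi_simple]
    simp [dmap]


lemma cast_inj_of_lt {a b : ℕ} (ha : a < m) (hb : b < m) (h : (a : ZMod m) = b) : a = b := by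
  have := congrArg ZMod.val h
  rwa [ZMod.val_cast_of_lt ha, ZMod.val_cast_of_lt hb] at this

lemma dvd_of_cast_eq_neg {a b : ℕ} (h : (a : ZMod m) = -(b : ZMod m)) : m ∣ a + b := by
  have : ((a + b : ℕ) : ZMod m) = 0 := by push_cast; rw [h]; ring
  rwa [ZMod.natCast_eq_zero_iff] at this

lemma UU (hm : 2 ≤ m) (hM : M 0 1 = m) {j k : ℕ} (hj : j ≤ m) (hk : k ≤ m)
    (h : U cs j = U cs k) : j = k := by
  have h2 := congrArg (phi cs hM) h
  rw [phi_U, phi_U] at h2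
  by_cases e1 : j % 2 = 0 <;> by_cases e2 : k % 2 = 0 <;>
    simp [Nat.even_iff, e1, e2] at h2
  · have h3 := cast_inj_of_lt (m := m) (a := j / 2) (b := k / 2) (by omega) (by omega) h2
    omega
  · have h3 := cast_inj_of_lt (m := m) (a := j / 2) (b := k / 2) (by omega) (by omega) h2
    omega

lemma VV (hm : 2 ≤ m) (hM : M 0 1 = m) {j k : ℕ} (hj : j ≤ m) (hk : k ≤ m)
    (h : V cs j = V cs k) : j = k := by
  have h2 := congrArg (phi cs hM) h
  rw [phi_V, phi_V] at h2
  by_cases e1 : j % 2 = 0 <;> by_cases e2 : k % 2 = 0 <;>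
    simp [Nat.even_iff, e1, e2] at h2
  · have h3 := cast_inj_of_lt (m := m) (a := j / 2) (b := k / 2) (by omega) (by omega)
      h2
    omega
  · have h3 := cast_inj_of_lt (m := m) (a := j / 2) (b := k / 2) (by omega) (by omega)
      h2
    omega

lemma UV (hm : 2 ≤ m) (hM : M 0 1 = m) {j k : ℕ} (hj : j ≤ m) (hk : k ≤ m)
    (h : U cs j = V cs k) : (j = 0 ∧ k = 0) ∨ (j = m ∧ k = m) := by
  have h2 := congrArg (phi cs hM) h
  rw [phi_U, phi_V] at h2
  by_cases e1 : j % 2 = 0 <;> by_cases e2 : k % 2 = 0 <;>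
    simp [Nat.even_iff, e1, e2] at h2
  · -- both even : ↑(j/2) = -↑(k/2)
    have hd := dvd_of_cast_eq_neg (m := m) h2
    have hb : j / 2 + k / 2 ≤ m := by omega
    have : j / 2 + k / 2 = 0 ∨ j / 2 + k / 2 = m := by
      rcases Nat.eq_zero_or_pos (j / 2 + k / 2) with h0 | hpos
      · exact Or.inl h0
      · exact Or.inr (le_antisymm hb (Nat.le_of_dvd hpos hd))
    omega
  · -- both odd : 1 + ↑(j/2) = -↑(k/2)
    have h3 : ((1 + j / 2 : ℕ) : ZMod m) = -((k / 2 : ℕ) : ZMod m) := by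
      push_cast
      rw [← h2]
    have hd := dvd_of_cast_eq_neg (m := m) h3
    have hb : 1 + j / 2 + k / 2 ≤ m := by omega
    have hpos : 0 < 1 + j / 2 + k / 2 := by omega
    have : 1 + j / 2 + k / 2 = m := le_antisymm hb (Nat.le_of_dvd hpos hd)
    omega


lemma len_U_lt (hm : 2 ≤ m) (hM : M 0 1 = m) : cs.length (U cs (m+1)) < m + 1 := by
  have h := cs.not_isReduced_alternatingWord 0 1 (m := m + 1) (by omega) (by omega)
  have hle := len_U_le cs (m+1)
  rw [CoxeterSystem.IsReduced, length_alternatingWord] at h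
  exact lt_of_le_of_ne hle h

lemma len_V_lt (hm : 2 ≤ m) (hM : M 0 1 = m) : cs.length (V cs (m+1)) < m + 1 := by
  have hM' : M 1 0 = m := (M.symmetric 1 0).trans hM
  have h := cs.not_isReduced_alternatingWord 1 0 (m := m + 1) (by omega) (by omega)
  have hle := len_V_le cs (m+1)
  rw [CoxeterSystem.IsReduced, length_alternatingWord] at h
  exact lt_of_le_of_ne hle h

lemma classify (hm : 2 ≤ m) (hM : M 0 1 = m) :
    ∀ n (w : W), cs.length w = n → n ≤ m ∧ (w = U cs n ∨ w = V cs n) := by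
  intro n
  induction n using Nat.strong_induction_on with
  | _ n ih =>
    intro w hw
    rcases Nat.eq_zero_or_pos n with rfl | hn
    · refine ⟨Nat.zero_le m, Or.inl ?_⟩
      rw [cs.length_eq_zero_iff.mp hw, U_zero]
    · have hw1 : w ≠ 1 := by
        intro h
        rw [h, cs.length_one] at hw
        omega
      obtain ⟨i, hi⟩ := cs.exists_rightDescent_of_ne_one hw1
      have hlen : cs.length (w * cs.simple i) = n - 1 := by
        rcases cs.length_mul_simple w i with h | h <;>
          · rw [hw] at h
            unfold CoxeterSystem.IsRightDescent at hi
            rw [hw] at hi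
            omega
      obtain ⟨hn1m, hcase⟩ := ih (n - 1) (by omega) _ hlen
      have hw' : w = (w * cs.simple i) * cs.simple i :=
        (cs.simple_mul_simple_cancel_right i).symm
      have hi0 : i = 0 ∨ i = 1 := by omega
      rcases hcase with hX | hX <;> rcases hi0 with rfl | rfl
      · -- w * s 0 = U (n-1) : w = U (n-1) * s 0 = V n
        have hwV : w = V cs n := by
          rw [hw', hX, ← V_succ]
          congr 1
          omega
        refine ⟨?_, Or.inr hwV⟩
        by_contra hcon
        have hnm : n = m + 1 := by omega
        have := len_V_lt cs hm hM
        rw [← hnm, ← hwV, hw] at this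
        omega
      · -- w * s 1 = U (n-1)
        rcases Nat.eq_zero_or_pos (n - 1) with h0 | hpos
        · -- w = s 1 = U 1, n = 1
          have hn1 : n = 1 := by omega
          have hwU : w = U cs 1 := by
            rw [hw', hX, h0, U_zero, one_mul, U_one]
          exact ⟨by omega, Or.inl (by rw [hn1]; exact hwU)⟩
        · -- w = U (n-1) * s 1 = V (n-2) : contradiction with length
          exfalso
          have hwV : w = V cs (n - 2) := by
            rw [hw', hX, show n - 1 = (n - 2) + 1 by omega, U_succ,
              cs.simple_mul_simple_cancel_right]
          have := len_V_le cs (n - 2)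
          rw [← hwV, hw] at this
          omega
      · -- w * s 0 = V (n-1)
        rcases Nat.eq_zero_or_pos (n - 1) with h0 | hpos
        · have hn1 : n = 1 := by omega
          have hwV : w = V cs 1 := by
            rw [hw', hX, h0, V_zero, one_mul, V_one]
          exact ⟨by omega, Or.inr (by rw [hn1]; exact hwV)⟩
        · exfalso
          have hwU : w = U cs (n - 2) := by
            rw [hw', hX, show n - 1 = (n - 2) + 1 by omega, V_succ,
              cs.simple_mul_simple_cancel_right]
          have := len_U_le cs (n - 2)
          rw [← hwU, hw] at this
          omega
      · -- w * s 1 = V (n-1) : w = V (n-1) * s 1 = U n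
        have hwU : w = U cs n := by
          rw [hw', hX, ← U_succ]
          congr 1
          omega
        refine ⟨?_, Or.inl hwU⟩
        by_contra hcon
        have hnm : n = m + 1 := by omega
        have := len_U_lt cs hm hM
        rw [← hnm, ← hwU, hw] at this
        omega


lemma UmVm (hM : M 0 1 = m) : U cs m = V cs m := by
  have hM' : M 1 0 = m := (M.symmetric 1 0).trans hM
  have h : cs.wordProd (alternatingWord 0 1 (M 0 1)) =
      cs.wordProd (alternatingWord 1 0 (M 1 0)) := cs.wordProd_braidWord_eq 0 1
  rw [hM, hM'] at h
  exact h

lemma U_mul_s1 (k : ℕ) : U cs (k + 1) * cs.simple 1 = V cs k := by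
  rw [U_succ, cs.simple_mul_simple_cancel_right]

lemma V_mul_s0 (k : ℕ) : V cs (k + 1) * cs.simple 0 = U cs k := by
  rw [V_succ, cs.simple_mul_simple_cancel_right]

lemma len_U (hm : 2 ≤ m) (hM : M 0 1 = m) {k : ℕ} (hk : k ≤ m) :
    cs.length (U cs k) = k := by
  obtain ⟨hle, hc⟩ := classify cs hm hM (cs.length (U cs k)) (U cs k) rfl
  have hlek := len_U_le cs k
  rcases hc with h | h
  · exact (UU cs hm hM hk hle h).symm
  · rcases UV cs hm hM hk hle h with ⟨h1, h2⟩ | ⟨h1, h2⟩ <;> omega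

lemma len_V (hm : 2 ≤ m) (hM : M 0 1 = m) {k : ℕ} (hk : k ≤ m) :
    cs.length (V cs k) = k := by
  obtain ⟨hle, hc⟩ := classify cs hm hM (cs.length (V cs k)) (V cs k) rfl
  have hlek := len_V_le cs k
  rcases hc with h | h
  · rcases UV cs hm hM hle hk h.symm with ⟨h1, h2⟩ | ⟨h1, h2⟩ <;> omega
  · exact (VV cs hm hM hk hle h).symm

lemma des_one : cs.des (1 : W) = 0 := by
  unfold CoxeterSystem.des
  simp [cs.length_one]

lemma des_Um (hm : 2 ≤ m) (hM : M 0 1 = m) : cs.des (U cs m) = 2 := by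
  obtain ⟨k, hk⟩ : ∃ k, m = k + 1 := ⟨m - 1, by omega⟩
  unfold CoxeterSystem.des
  rw [Finset.filter_true_of_mem, Finset.card_univ, Fintype.card_fin]
  intro i _
  have hi : i = 0 ∨ i = 1 := by omega
  have hU := len_U cs hm hM (le_refl m)
  rcases hi with rfl | rfl
  · have hs : U cs m * cs.simple 0 = U cs k := by
      rw [UmVm cs hM, hk, V_mul_s0]
    rw [hs, len_U cs hm hM (by omega : k ≤ m), hU]
    omega
  · have hs : U cs m * cs.simple 1 = V cs k := by
      rw [hk, U_mul_s1]
    rw [hs, len_V cs hm hM (by omega : k ≤ m), hU]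
    omega

lemma des_mid (hm : 2 ≤ m) (hM : M 0 1 = m) {w : W} (h1 : cs.length w ≠ 0)
    (h2 : cs.length w ≠ m) : cs.des w = 1 := by
  obtain ⟨hle, hc⟩ := classify cs hm hM (cs.length w) w rfl
  set n := cs.length w with hn
  obtain ⟨p, hp⟩ : ∃ p, n = p + 1 := ⟨n - 1, by omega⟩
  have hpm : p + 1 ≤ m - 1 := by omega
  rcases hc with h | h
  · have hs1 : w * cs.simple 1 = V cs p := by
      rw [h, hp, U_mul_s1]
    have hs0 : w * cs.simple 0 = V cs (n + 1) := by
      rw [h, ← V_succ]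
    unfold CoxeterSystem.des
    rw [show (Finset.univ.filter fun i : Fin 2 =>
        cs.length (w * cs.simple i) < cs.length w) = {1} from ?_, Finset.card_singleton]
    ext i
    simp only [Finset.mem_filter, Finset.mem_univ, true_and, Finset.mem_singleton]
    have hi : i = 0 ∨ i = 1 := by omega
    rcases hi with rfl | rfl
    · rw [hs0, len_V cs hm hM (by omega : n + 1 ≤ m), ← hn]
      constructor
      · intro hcon; omega
      · intro hcon; exact absurd hcon (by norm_num)
    · rw [hs1, len_V cs hm hM (by omega : p ≤ m), ← hn]
      constructor
      · intro _; rfl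
      · intro _; omega
  · have hs0 : w * cs.simple 0 = U cs p := by
      rw [h, hp, V_mul_s0]
    have hs1 : w * cs.simple 1 = U cs (n + 1) := by
      rw [h, ← U_succ]
    unfold CoxeterSystem.des
    rw [show (Finset.univ.filter fun i : Fin 2 =>
        cs.length (w * cs.simple i) < cs.length w) = {0} from ?_, Finset.card_singleton]
    ext i
    simp only [Finset.mem_filter, Finset.mem_univ, true_and, Finset.mem_singleton]
    have hi : i = 0 ∨ i = 1 := by omega
    rcases hi with rfl | rfl
    · rw [hs0, len_U cs hm hM (by omega : p ≤ m), ← hn]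
      constructor
      · intro _; rfl
      · intro _; omega
    · rw [hs1, len_U cs hm hM (by omega : n + 1 ≤ m), ← hn]
      constructor
      · intro hcon; omega
      · intro hcon; exact absurd hcon (by norm_num)

lemma inv_Um (hm : 2 ≤ m) (hM : M 0 1 = m) : (U cs m)⁻¹ = U cs m := by
  have hlen : cs.length (U cs m)⁻¹ = m := by
    rw [cs.length_inv, len_U cs hm hM (le_refl m)]
  obtain ⟨_, hc⟩ := classify cs hm hM (cs.length (U cs m)⁻¹) _ rfl
  rw [hlen] at hc
  rcases hc with h | h
  · exact h
  · rw [h, UmVm cs hM]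

lemma eq_Um_of_len (hm : 2 ≤ m) (hM : M 0 1 = m) {w : W} (h : cs.length w = m) :
    w = U cs m := by
  obtain ⟨_, hc⟩ := classify cs hm hM (cs.length w) w rfl
  rw [h] at hc
  rcases hc with h' | h'
  · exact h'
  · rw [h', UmVm cs hM]

lemma tStat_one : cs.tStat (1 : W) = 0 := by
  rw [CoxeterSystem.tStat, inv_one, des_one]

lemma tStat_Um (hm : 2 ≤ m) (hM : M 0 1 = m) : cs.tStat (U cs m) = 4 := by
  rw [CoxeterSystem.tStat, inv_Um cs hm hM, des_Um cs hm hM]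

lemma tStat_other (hm : 2 ≤ m) (hM : M 0 1 = m) {w : W} (h1 : w ≠ 1)
    (h2 : w ≠ U cs m) : cs.tStat w = 2 := by
  rw [CoxeterSystem.tStat]
  have hl1 : cs.length w ≠ 0 := fun h => h1 (cs.length_eq_zero_iff.mp h)
  have hl2 : cs.length w ≠ m := fun h => h2 (eq_Um_of_len cs hm hM h)
  have hi1 : cs.length w⁻¹ ≠ 0 := by rwa [cs.length_inv]
  have hi2 : cs.length w⁻¹ ≠ m := by rwa [cs.length_inv]
  rw [des_mid cs hm hM hl1 hl2, des_mid cs hm hM hi1 hi2]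


lemma card_W [Fintype W] (cs : CoxeterSystem M W) (hm : 2 ≤ m) (hM : M 0 1 = m) :
    Fintype.card W = 2 * m := by
  classical
  set c : ℕ → W := fun j => if j < m then U cs j else V cs (j - m + 1) with hc
  have himg : (Finset.range (2 * m)).image c = Finset.univ := by
    apply Finset.eq_univ_iff_forall.mpr
    intro w
    rw [Finset.mem_image]
    obtain ⟨hle, hcase⟩ := classify cs hm hM (cs.length w) w rfl
    set n := cs.length w
    rcases hcase with h | h
    · by_cases hn : n < m
      · refine ⟨n, Finset.mem_range.mpr (by omega), ?_⟩
        simp only [hc]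
        rw [if_pos hn]
        exact h.symm
      · have hnm : n = m := by omega
        refine ⟨2 * m - 1, Finset.mem_range.mpr (by omega), ?_⟩
        have hlt : ¬ (2 * m - 1 < m) := by omega
        simp only [hc]
        rw [if_neg hlt, show 2 * m - 1 - m + 1 = m by omega, ← UmVm cs hM, ← hnm]
        exact h.symm
    · by_cases hn : n = 0
      · refine ⟨0, Finset.mem_range.mpr (by omega), ?_⟩
        simp only [hc]
        rw [if_pos (by omega : (0:ℕ) < m), U_zero, h, hn, V_zero]
      · refine ⟨n + m - 1, Finset.mem_range.mpr (by omega), ?_⟩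
        have hge : ¬ (n + m - 1 < m) := by omega
        simp only [hc]
        rw [if_neg hge, show n + m - 1 - m + 1 = n by omega]
        exact h.symm
  have hinj : Set.InjOn c (Finset.range (2 * m)) := by
    intro j hj k hk hjk
    simp only [Finset.coe_range, Set.mem_Iio] at hj hk
    simp only [hc] at hjk
    by_cases h1 : j < m <;> by_cases h2 : k < m
    · rw [if_pos h1, if_pos h2] at hjk
      exact UU cs hm hM (by omega) (by omega) hjk
    · rw [if_pos h1, if_neg h2] at hjk
      rcases UV cs hm hM (by omega) (by omega) hjk with ⟨a, b⟩ | ⟨a, b⟩ <;> omega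
    · rw [if_neg h1, if_pos h2] at hjk
      rcases UV cs hm hM (by omega) (by omega) hjk.symm with ⟨a, b⟩ | ⟨a, b⟩ <;> omega
    · rw [if_neg h1, if_neg h2] at hjk
      have := VV cs hm hM (by omega) (by omega) hjk
      omega
  rw [← Finset.card_univ, ← himg, Finset.card_image_of_injOn hinj, Finset.card_range]

end TSD

/-- Let `(W, {s,s'})` be a Coxeter system of rank 2 with `m(s,s') = m`, `2 ≤ m < ∞`, `W` finite
(so `W` is dihedral of order `2m`). Then `Σ_{w ∈ W} (t(w) − 2)² = 8`; equivalently, the two-sided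
descent statistic `T` under the uniform distribution on `W` has `E(T) = 2` and `Var(T) = 4/m`. -/
theorem two_sided_descent_dihedral
    {W : Type*} [Group W] [Fintype W] (m : ℕ) (hm : 2 ≤ m)
    (M : CoxeterMatrix (Fin 2)) (hM : M 0 1 = m) (cs : CoxeterSystem M W) :
    (∑ w : W, ((cs.tStat w : ℝ) - 2) ^ 2) = 8 ∧
    finExp (fun w => (cs.tStat w : ℝ)) = 2 ∧
    finVar (fun w => (cs.tStat w : ℝ)) = 4 / m := by
  classical
  have hW0 : (1 : W) ≠ TSD.U cs m := by
    intro h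
    have hlm := TSD.len_U cs hm hM (le_refl m)
    rw [← h, cs.length_one] at hlm
    omega
  have hcard : Fintype.card W = 2 * m := TSD.card_W cs hm hM
  have hm0 : (m : ℝ) ≠ 0 := by positivity
  have hsum8 : (∑ w : W, ((cs.tStat w : ℝ) - 2) ^ 2) = 8 := by
    have hz : ∀ w ∈ (Finset.univ : Finset W), w ∉ ({1, TSD.U cs m} : Finset W) →
        ((cs.tStat w : ℝ) - 2) ^ 2 = 0 := by
      intro w _ hw
      simp only [Finset.mem_insert, Finset.mem_singleton, not_or] at hw
      rw [TSD.tStat_other cs hm hM hw.1 hw.2]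
      norm_num
    rw [← Finset.sum_subset (Finset.subset_univ _) hz, Finset.sum_pair hW0,
      TSD.tStat_one, TSD.tStat_Um cs hm hM]
    norm_num
  have hsumT : (∑ w : W, (cs.tStat w : ℝ)) = 2 * (Fintype.card W : ℝ) := by
    have hsplit : ∀ w : W, (cs.tStat w : ℝ) = 2 + ((cs.tStat w : ℝ) - 2) := by
      intro w; ring
    rw [Finset.sum_congr rfl (fun w _ => hsplit w), Finset.sum_add_distrib]
    have hz : ∀ w ∈ (Finset.univ : Finset W), w ∉ ({1, TSD.U cs m} : Finset W) →
        (cs.tStat w : ℝ) - 2 = 0 := by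
      intro w _ hw
      simp only [Finset.mem_insert, Finset.mem_singleton, not_or] at hw
      rw [TSD.tStat_other cs hm hM hw.1 hw.2]
      norm_num
    rw [← Finset.sum_subset (Finset.subset_univ _) hz, Finset.sum_pair hW0,
      TSD.tStat_one, TSD.tStat_Um cs hm hM, Finset.sum_const, Finset.card_univ]
    push_cast
    ring
  have hE : finExp (fun w => (cs.tStat w : ℝ)) = 2 := by
    simp only [finExp]
    rw [hsumT, hcard]
    push_cast
    field_simp
  have hVar : finVar (fun w => (cs.tStat w : ℝ)) = 4 / m := by
    rw [finVar, hE]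
    simp only [finExp]
    rw [hsum8, hcard]
    push_cast
    rw [div_eq_div_iff (by positivity) (by positivity)]
    ring
  exact ⟨hsum8, hE, hVar⟩

end
end
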